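/- arXiv:2301.10136 — 7 statements merged into one kernel-verified Lean document; each statement's English description precedes it below -/
import Mathlib

section
/- Let A be a finite abelian group and ℓ the smallest prime dividing |A|. Suppose A/A[ℓ] is cyclic, where A[ℓ] denotes the ℓ-torsion subgroup. Then every subgroup H of A generated by two elements can be generated by two elements a, b with b of order dividing ℓ. -/
/-- `ℚ/ℤ` as `AddCircle (1 : ℚ)`. -/
abbrev QZ := AddCircle (1 : ℚ)

/-- The `ℓ`-torsion subgroup `A[ℓ] = {a : ℓ • a = 0}`. -/
def torsAt (ℓ : ℕ) (A : Type*) [AddCommGroup A] : AddSubgroup A where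
  carrier := {a | ℓ • a = 0}
  zero_mem' := by simp
  add_mem' := by
    intro a b ha hb
    simp only [Set.mem_setOf_eq, smul_add] at *
    rw [ha, hb, add_zero]
  neg_mem' := by
    intro a ha
    simp only [Set.mem_setOf_eq, smul_neg] at *
    rw [ha, neg_zero]

/-!
Let `π : A → A/A[ℓ]` and write `π a = m • g`, `π b = k • g` for a generator `g`. Dividing
`(m, k)` by its gcd gives a primitive vector `(m', k')`, which completes to a matrix of
determinant one with second row `(-k', m')`. Changing generators by this matrix keeps the
subgroup, and the new second generator `-k' • a + m' • b` maps to `(m k' - k m') • g = 0`,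
so it lies in `A[ℓ]`.
-/

theorem Int.exists_isCoprime_mul_eq_mul (m k : ℤ) :
    ∃ m' k' : ℤ, IsCoprime m' k' ∧ m * k' = k * m' := by
  rcases (Int.gcd m k).eq_zero_or_pos with hd | hd
  · obtain ⟨rfl, rfl⟩ := Int.gcd_eq_zero_iff.mp hd
    exact ⟨1, 0, isCoprime_one_left, by ring⟩
  · obtain ⟨d, m', k', -, hcop, rfl, rfl⟩ := Int.exists_gcd_one' hd
    exact ⟨m', k', Int.isCoprime_iff_gcd_eq_one.mpr hcop, by ring⟩

namespace AddSubgroup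

variable {A : Type*} [AddCommGroup A]

theorem closure_pair_zsmul_add_le (a b : A) (u v s t : ℤ) :
    closure {u • a + v • b, s • a + t • b} ≤ closure {a, b} := by
  have ha : a ∈ closure {a, b} := subset_closure (Set.mem_insert _ _)
  have hb : b ∈ closure {a, b} := subset_closure (Set.mem_insert_of_mem _ rfl)
  rw [closure_le]
  rintro x (rfl | rfl) <;> exact add_mem (zsmul_mem ha _) (zsmul_mem hb _)

theorem closure_pair_eq_of_det_eq_one (a b : A) {u v s t : ℤ} (h : u * t - v * s = 1) :
    closure {a, b} = closure {u • a + v • b, s • a + t • b} := by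
  refine le_antisymm ?_ (closure_pair_zsmul_add_le a b u v s t)
  have ha : a = t • (u • a + v • b) + (-v) • (s • a + t • b) := by
    linear_combination (norm := module) -h • a
  have hb : b = (-s) • (u • a + v • b) + u • (s • a + t • b) := by
    linear_combination (norm := module) -h • b
  calc closure {a, b}
      = closure {t • (u • a + v • b) + (-v) • (s • a + t • b),
          (-s) • (u • a + v • b) + u • (s • a + t • b)} := by rw [← ha, ← hb]
    _ ≤ closure {u • a + v • b, s • a + t • b} := closure_pair_zsmul_add_le _ _ _ _ _ _

theorem exists_closure_pair_eq_and_map_eq_zero {C : Type*} [AddGroup C] [IsAddCyclic C]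
    (f : A →+ C) (a b : A) :
    ∃ a' b' : A, closure {a, b} = closure {a', b'} ∧ f b' = 0 := by
  obtain ⟨g, hg⟩ := IsAddCyclic.exists_generator (α := C)
  obtain ⟨m, hm⟩ := mem_zmultiples_iff.mp (hg (f a))
  obtain ⟨k, hk⟩ := mem_zmultiples_iff.mp (hg (f b))
  obtain ⟨m', k', ⟨u, v, huv⟩, hprop⟩ := Int.exists_isCoprime_mul_eq_mul m k
  refine ⟨u • a + v • b, (-k') • a + m' • b,
    closure_pair_eq_of_det_eq_one a b (by linear_combination huv), ?_⟩
  rw [map_add, map_zsmul, map_zsmul, ← hm, ← hk, smul_smul, smul_smul, ← add_zsmul]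
  rw [show -k' * m + m' * k = 0 by linear_combination -hprop, zero_zsmul]

end AddSubgroup

theorem stmt0_general (A : Type*) [AddCommGroup A] (ℓ : ℕ)
    (hcyc : IsAddCyclic (A ⧸ torsAt ℓ A))
    (H : AddSubgroup A) (a b : A) (hH : H = AddSubgroup.closure {a, b}) :
    ∃ a' b' : A, H = AddSubgroup.closure {a', b'} ∧ addOrderOf b' ∣ ℓ := by
  obtain ⟨a', b', hcl, hb'⟩ :=
    AddSubgroup.exists_closure_pair_eq_and_map_eq_zero (QuotientAddGroup.mk' (torsAt ℓ A)) a b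
  exact ⟨a', b', hH.trans hcl,
    addOrderOf_dvd_iff_nsmul_eq_zero.mpr ((QuotientAddGroup.eq_zero_iff b').mp hb')⟩

/-- If `A/A[ℓ]` is cyclic (ℓ the smallest prime dividing `|A|`), every 2-generated
subgroup of `A` is generated by two elements one of which has order dividing `ℓ`. -/
theorem stmt0 (A : Type*) [AddCommGroup A] [Fintype A] (ℓ : ℕ)
    (hℓ : ℓ.Prime) (hdvd : ℓ ∣ Fintype.card A)
    (hmin : ∀ p : ℕ, p.Prime → p ∣ Fintype.card A → ℓ ≤ p)
    (hcyc : IsAddCyclic (A ⧸ torsAt ℓ A))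
    (H : AddSubgroup A) (a b : A) (hH : H = AddSubgroup.closure {a, b}) :
    ∃ a' b' : A, H = AddSubgroup.closure {a', b'} ∧ addOrderOf b' ∣ ℓ :=
  stmt0_general A ℓ hcyc H a b hH
end

section
/- Let A be a finite abelian group and ℓ the smallest prime dividing |A|. If A/A[ℓ] is cyclic, then A ≅ (ℤ/ℓℤ)^r × ℤ/kℤ for some r ≥ 0, where k is the exponent of A. -/
/-- `(Fin (n+1) → M) ≃+ M × (Fin n → M)`. -/
def piSplitAux (n : ℕ) (M : Type*) [AddCommMonoid M] : (Fin (n+1) → M) ≃+ M × (Fin n → M) :=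
  { Fin.consEquiv (fun _ => M) |>.symm with map_add' := fun f g => rfl }

instance zmultCyc (A : Type*) [AddCommGroup A] (x : A) :
    IsAddCyclic (AddSubgroup.zmultiples x) := by
  refine ⟨⟨x, AddSubgroup.mem_zmultiples x⟩, fun y => ?_⟩
  obtain ⟨y, n, rfl⟩ := y
  exact ⟨n, Subtype.ext rfl⟩

/-- If `A/A[ℓ]` is cyclic then `A ≅ (ℤ/ℓℤ)^r × ℤ/kℤ` with `k` the exponent of `A`. -/
theorem stmt1 (A : Type*) [AddCommGroup A] [Fintype A] [Nontrivial A] (ℓ : ℕ)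
    (hℓ : ℓ.Prime) (hdvd : ℓ ∣ Fintype.card A)
    (hmin : ∀ p : ℕ, p.Prime → p ∣ Fintype.card A → ℓ ≤ p)
    (hcyc : IsAddCyclic (A ⧸ torsAt ℓ A)) :
    ∃ r : ℕ, Nonempty (A ≃+ ((Fin r → ZMod ℓ) × ZMod (AddMonoid.exponent A))) := by
  classical
  haveI := Fact.mk hℓ
  obtain ⟨g, hg⟩ := hcyc
  obtain ⟨x, rfl⟩ := QuotientAddGroup.mk'_surjective (torsAt ℓ A) g
  set T : AddSubgroup A := torsAt ℓ A with hTdef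
  haveI : Module (ZMod ℓ) T :=
    AddCommGroup.zmodModule (n := ℓ) (fun t => Subtype.ext (by
      have ht : ℓ • (t : A) = 0 := t.2
      simpa using ht))
  set C : AddSubgroup A := AddSubgroup.zmultiples x with hCdef
  set U : Submodule (ZMod ℓ) T := AddSubgroup.toZModSubmodule ℓ (C.comap T.subtype) with hUdef
  obtain ⟨W, hUW⟩ := U.exists_isCompl
  set W' : AddSubgroup A := W.toAddSubgroup.map T.subtype with hWdef
  -- codisjointness
  have hsup : C ⊔ W' = ⊤ := by
    rw [eq_top_iff]
    rintro a -
    obtain ⟨n, hn⟩ := hg (QuotientAddGroup.mk' T a)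
    have hmem : a - n • x ∈ T := by
      have : QuotientAddGroup.mk' T (n • x) = QuotientAddGroup.mk' T a := by
        rw [map_zsmul]; exact hn
      have := (QuotientAddGroup.eq_iff_sub_mem.mp this)
      simpa using T.neg_mem this
    set t : T := ⟨a - n • x, hmem⟩ with htdef
    have hmem2 : t ∈ (U ⊔ W : Submodule (ZMod ℓ) T) := by
      rw [hUW.sup_eq_top]; exact Submodule.mem_top
    obtain ⟨u, hu, w, hw, huw⟩ := Submodule.mem_sup.mp hmem2
    have hxC : n • x ∈ C := AddSubgroup.zsmul_mem _ (AddSubgroup.mem_zmultiples x) n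
    have huC : (u : A) ∈ C := hu
    have hwW' : (w : A) ∈ W' := ⟨w, hw, rfl⟩
    have ha : a = (n • x + (u : A)) + (w : A) := by
      have : (u : A) + (w : A) = a - n • x := by
        rw [← AddSubgroup.coe_add]; exact congrArg Subtype.val huw
      rw [add_assoc, this]; abel
    rw [ha]
    exact AddSubgroup.add_mem_sup (C.add_mem hxC huC) hwW'
  have hdis : Disjoint C W' := by
    rw [AddSubgroup.disjoint_def]
    rintro a haC ⟨t, htW, rfl⟩
    have htU : t ∈ U := haC
    have ht0 : t = 0 := (Submodule.disjoint_def.mp hUW.disjoint) t htU htW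
    simp [ht0]
  have hcompl : IsCompl C W' := ⟨hdis, codisjoint_iff.mpr hsup⟩
  have hcompl2 : IsCompl (AddSubgroup.toIntSubmodule C) (AddSubgroup.toIntSubmodule W') :=
    (AddSubgroup.toIntSubmodule (M := A)).isCompl hcompl
  let e1 : ((AddSubgroup.toIntSubmodule C) × (AddSubgroup.toIntSubmodule W')) ≃ₗ[ℤ] A :=
    Submodule.prodEquivOfIsCompl _ _ hcompl2
  let eC0 : (AddSubgroup.toIntSubmodule C) ≃+ C :=
    { toFun := fun a => ⟨a.1, a.2⟩, invFun := fun a => ⟨a.1, a.2⟩,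
      left_inv := fun a => rfl, right_inv := fun a => rfl, map_add' := fun a b => rfl }
  let eW0 : (AddSubgroup.toIntSubmodule W') ≃+ W' :=
    { toFun := fun a => ⟨a.1, a.2⟩, invFun := fun a => ⟨a.1, a.2⟩,
      left_inv := fun a => rfl, right_inv := fun a => rfl, map_add' := fun a b => rfl }
  set m : ℕ := Nat.card C with hmdef
  let eC : (AddSubgroup.toIntSubmodule C) ≃+ ZMod m :=
    eC0.trans (zmodAddCyclicAddEquiv inferInstance).symm
  -- W' ≃+ W
  let eW1 : W.toAddSubgroup ≃+ W' :=
    AddSubgroup.equivMapOfInjective W.toAddSubgroup T.subtype (AddSubgroup.subtype_injective T)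
  let eW2 : (↥W) ≃+ ↥W.toAddSubgroup :=
    { toFun := fun a => ⟨a.1, a.2⟩, invFun := fun a => ⟨a.1, a.2⟩,
      left_inv := fun a => rfl, right_inv := fun a => rfl, map_add' := fun a b => rfl }
  set s : ℕ := Module.finrank (ZMod ℓ) W with hsdef
  let eW3 : (↥W) ≃ₗ[ZMod ℓ] (Fin s → ZMod ℓ) := (Module.finBasis (ZMod ℓ) W).equivFun
  let E : A ≃+ (ZMod m) × (Fin s → ZMod ℓ) :=
    e1.toAddEquiv.symm.trans (AddEquiv.prodCongr eC
      (eW0.trans (eW1.symm.trans (eW2.symm.trans eW3.toAddEquiv))))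
  -- exponent computations
  have hexpE : AddMonoid.exponent A = Nat.lcm m (AddMonoid.exponent (Fin s → ZMod ℓ)) := by
    rw [AddMonoid.exponent_eq_of_addEquiv E, AddMonoid.exponent_prod, ZMod.exponent]
    exact lcm_eq_nat_lcm _ _
  have hpidvd : AddMonoid.exponent (Fin s → ZMod ℓ) ∣ ℓ := by
    apply AddMonoid.exponent_dvd_of_forall_nsmul_eq_zero
    intro f
    funext i
    show ℓ • (f i) = 0
    rw [nsmul_eq_mul, ZMod.natCast_self, zero_mul]
  have hm0 : m ≠ 0 := Nat.card_ne_zero.mpr ⟨inferInstance, inferInstance⟩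
  by_cases hlm : ℓ ∣ m
  · -- exponent A = m
    have hexp : AddMonoid.exponent A = m := by
      rw [hexpE]
      exact Nat.dvd_antisymm (Nat.lcm_dvd dvd_rfl (hpidvd.trans hlm)) (Nat.dvd_lcm_left _ _)
    refine ⟨s, ?_⟩
    rw [hexp]
    exact ⟨E.trans (AddEquiv.prodComm)⟩
  · -- coprime case
    have hcop : Nat.Coprime ℓ m := (Nat.Prime.coprime_iff_not_dvd hℓ).mpr hlm
    -- U = ⊥
    have hUbot : U = ⊥ := by
      rw [Submodule.eq_bot_iff]
      rintro t ht
      have htC : (t : A) ∈ C := ht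
      have hord1 : addOrderOf (t : A) ∣ ℓ := by
        rw [addOrderOf_dvd_iff_nsmul_eq_zero]
        exact t.2
      have hord2 : addOrderOf (t : A) ∣ m := AddSubgroup.addOrderOf_dvd_natCard C htC
      have : addOrderOf (t : A) = 1 :=
        (Nat.Coprime.coprime_dvd_left hord1 hcop).eq_one_of_dvd hord2
      have : (t : A) = 0 := AddMonoid.addOrderOf_eq_one_iff.mp this
      exact Subtype.ext this
    have hWtop : W = ⊤ := by
      have := hUW.symm.sup_eq_top
      rwa [hUbot, sup_bot_eq] at this
    -- T is nontrivial
    obtain ⟨a, ha⟩ := exists_prime_addOrderOf_dvd_card ℓ hdvd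
    have haT : a ∈ T := by
      show ℓ • a = 0
      rw [← ha]
      exact addOrderOf_nsmul_eq_zero a
    have ha0 : a ≠ 0 := by
      intro h
      rw [h, addOrderOf_zero] at ha
      exact hℓ.one_lt.ne' ha.symm
    have hWnt : Nontrivial W := by
      refine ⟨⟨⟨a, haT⟩, by rw [hWtop]; trivial⟩, 0, ?_⟩
      intro h
      apply ha0
      exact congrArg (fun z => ((z : T) : A)) (congrArg Subtype.val h)
    have hs0 : s ≠ 0 := by
      have : 0 < s := Module.finrank_pos
      omega
    obtain ⟨r, hr⟩ : ∃ r, s = r + 1 := ⟨s - 1, by omega⟩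
    -- ℓ ∣ exponent pi
    have hpil : AddMonoid.exponent (Fin s → ZMod ℓ) = ℓ := by
      refine Nat.dvd_antisymm hpidvd ?_
      have : addOrderOf (fun _ : Fin s => (1 : ZMod ℓ)) ∣ AddMonoid.exponent _ :=
        AddMonoid.addOrder_dvd_exponent _
      have horder : addOrderOf (fun _ : Fin s => (1 : ZMod ℓ)) = ℓ := by
        have hne : (fun _ : Fin s => (1 : ZMod ℓ)) ≠ 0 := by
          intro h
          have := congrFun h ⟨0, by omega⟩
          exact one_ne_zero this
        have hdl : addOrderOf (fun _ : Fin s => (1 : ZMod ℓ)) ∣ ℓ := by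
          rw [addOrderOf_dvd_iff_nsmul_eq_zero]
          funext i
          show ℓ • (1 : ZMod ℓ) = 0
          rw [nsmul_eq_mul, ZMod.natCast_self, zero_mul]
        rcases (Nat.Prime.eq_one_or_self_of_dvd hℓ _ hdl) with h1 | h1
        · exact absurd (AddMonoid.addOrderOf_eq_one_iff.mp h1) hne
        · exact h1
      rwa [horder] at this
    have hexp : AddMonoid.exponent A = m * ℓ := by
      rw [hexpE, hpil, Nat.Coprime.lcm_eq_mul hcop.symm]
    refine ⟨r, ?_⟩
    rw [hexp]
    have crt : ZMod (m * ℓ) ≃+ ZMod m × ZMod ℓ := (ZMod.chineseRemainder hcop.symm).toAddEquiv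
    refine ⟨E.trans ?_⟩
    let ecast : (Fin s → ZMod ℓ) ≃+ (Fin (r+1) → ZMod ℓ) :=
      { Equiv.arrowCongr (finCongr hr) (Equiv.refl _) with map_add' := fun f g => rfl }
    exact (AddEquiv.prodCongr (AddEquiv.refl (ZMod m)) (ecast.trans (piSplitAux r (ZMod ℓ)))).trans
      ((AddEquiv.prodAssoc (M := ZMod m) (N := ZMod ℓ) (P := Fin r → ZMod ℓ)).symm.trans
        (AddEquiv.prodComm.trans (AddEquiv.prodCongr (AddEquiv.refl (Fin r → ZMod ℓ)) crt.symm)))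
end

section
/- Let A be a finite abelian group that is not cyclic. Then there exists a nontrivial alternating bilinear pairing A × A → ℚ/ℤ; equivalently Hom(∧²A, ℚ/ℤ) ≠ 0. -/
lemma exists_prime_indep (A : Type*) [AddCommGroup A] [Fintype A] (hnc : ¬ IsAddCyclic A) :
    ∃ p : ℕ, p.Prime ∧ ∃ a₁ b : A, p • a₁ = 0 ∧ p • b = 0 ∧
      Function.Injective (fun ij : ZMod p × ZMod p => ij.1.val • a₁ + ij.2.val • b) := by
  classical
  obtain ⟨a, ha⟩ := AddMonoid.exists_addOrderOf_eq_exponent (G := A)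
    AddMonoid.ExponentExists.of_finite
  have hmpos : 0 < AddMonoid.exponent A :=
    AddMonoid.exponent_pos.mpr AddMonoid.ExponentExists.of_finite
  set H := AddSubgroup.zmultiples a with hH
  have hHne : H ≠ ⊤ := by
    intro h
    exact hnc ⟨a, fun x => AddSubgroup.mem_zmultiples_iff.mp (by rw [← hH, h]; trivial)⟩
  have hQne : Nat.card (A ⧸ H) ≠ 1 := by
    intro h
    have : H = ⊤ := by
      have h2 := AddSubgroup.card_eq_card_quotient_mul_card_addSubgroup H
      rw [h, one_mul] at h2
      exact AddSubgroup.eq_top_of_card_eq H h2.symm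
    exact hHne this
  obtain ⟨p, hp, hpd⟩ := Nat.exists_prime_and_dvd hQne
  haveI : Fact p.Prime := ⟨hp⟩
  haveI : Fintype (A ⧸ H) := Fintype.ofFinite _
  rw [Nat.card_eq_fintype_card] at hpd
  obtain ⟨ybar, hybar⟩ := exists_prime_addOrderOf_dvd_card p hpd
  obtain ⟨y, rfl⟩ := QuotientAddGroup.mk'_surjective H ybar
  have hmy : AddMonoid.exponent A • (QuotientAddGroup.mk' H y) = 0 := by
    rw [← map_nsmul, AddMonoid.exponent_nsmul_eq_zero, map_zero]
  have hpm : p ∣ AddMonoid.exponent A := by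
    rw [← hybar]; exact addOrderOf_dvd_of_nsmul_eq_zero hmy
  have hppos := hp.pos
  obtain ⟨a₁, ha₁def⟩ : ∃ x : A, x = (AddMonoid.exponent A / p) • a := ⟨_, rfl⟩
  have horda₁ : addOrderOf a₁ = p := by
    rw [ha₁def, ← ha]
    exact addOrderOf_nsmul_addOrderOf_sub (by rw [ha]; exact hmpos.ne') (by rw [ha]; exact hpm)
  have hpa₁ : p • a₁ = 0 := by rw [← horda₁]; exact addOrderOf_nsmul_eq_zero a₁
  have ha₁H : a₁ ∈ H := by
    rw [ha₁def]
    exact AddSubgroup.nsmul_mem H (AddSubgroup.mem_zmultiples a) _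
  have hpyH : p • y ∈ H := by
    have : QuotientAddGroup.mk' H (p • y) = 0 := by
      rw [map_nsmul, ← hybar]; exact addOrderOf_nsmul_eq_zero _
    exact (QuotientAddGroup.eq_zero_iff _).mp this
  obtain ⟨k, hk⟩ := AddSubgroup.mem_zmultiples_iff.mp hpyH
  have hmdvd : ((AddMonoid.exponent A : ℕ) : ℤ) ∣ ((AddMonoid.exponent A / p : ℕ) : ℤ) * k := by
    have h0 : (((addOrderOf a / p : ℕ) : ℤ) * k) • a = 0 := by
      rw [mul_smul, hk, ← natCast_zsmul y p, smul_smul]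
      norm_cast
      rw [Nat.div_mul_cancel (show p ∣ addOrderOf a by rw [ha]; exact hpm), ha]
      exact AddMonoid.exponent_nsmul_eq_zero y
    have h1 := addOrderOf_dvd_iff_zsmul_eq_zero.mpr h0
    rw [ha] at h1
    exact h1
  have hpk : (p : ℤ) ∣ k := by
    have hmp : ((AddMonoid.exponent A : ℕ) : ℤ) = ((AddMonoid.exponent A / p : ℕ) : ℤ) * p := by
      norm_cast; rw [Nat.div_mul_cancel hpm]
    have hmpne : ((AddMonoid.exponent A / p : ℕ) : ℤ) ≠ 0 := by
      norm_cast
      exact (Nat.div_ne_zero_iff_of_dvd hpm).mpr ⟨hmpos.ne', hp.ne_zero⟩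
    rw [hmp] at hmdvd
    exact (mul_dvd_mul_iff_left hmpne).mp hmdvd
  obtain ⟨b, hbdef⟩ : ∃ x : A, x = y - (k / p) • a := ⟨_, rfl⟩
  have hpb : p • b = 0 := by
    rw [hbdef, smul_sub, ← natCast_zsmul ((k / (p : ℤ)) • a) p, smul_smul,
      Int.mul_ediv_cancel' hpk, hk, sub_self]
  have hbbar : QuotientAddGroup.mk' H b = QuotientAddGroup.mk' H y := by
    rw [hbdef, map_sub, sub_eq_self]
    exact (QuotientAddGroup.eq_zero_iff _).mpr
      (AddSubgroup.zsmul_mem H (AddSubgroup.mem_zmultiples a) _)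
  refine ⟨p, hp, a₁, b, hpa₁, hpb, ?_⟩
  rintro ⟨i, j⟩ ⟨i', j'⟩ hij
  simp only at hij
  have hmk : j.val • (QuotientAddGroup.mk' H y) = j'.val • (QuotientAddGroup.mk' H y) := by
    have hz : QuotientAddGroup.mk' H a₁ = 0 := (QuotientAddGroup.eq_zero_iff _).mpr ha₁H
    have h1 := congrArg (QuotientAddGroup.mk' H) hij
    simp only [map_add, map_nsmul, hz, smul_zero, zero_add, hbbar] at h1
    exact h1
  have hjz : ((j.val : ℤ) - (j'.val : ℤ)) • (QuotientAddGroup.mk' H y) = 0 := by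
    rw [sub_smul, natCast_zsmul, natCast_zsmul, hmk, sub_self]
  have hjd : ((p : ℤ)) ∣ ((j.val : ℤ) - j'.val) := by
    have h2 := addOrderOf_dvd_iff_zsmul_eq_zero.mpr hjz
    rw [hybar] at h2
    exact h2
  have hj : j = j' := by
    have := (ZMod.intCast_zmod_eq_zero_iff_dvd _ p).mpr hjd
    push_cast at this
    rw [sub_eq_zero, ZMod.natCast_val, ZMod.natCast_val, ZMod.cast_id, ZMod.cast_id] at this
    exact this
  subst hj
  have hia : i.val • a₁ = i'.val • a₁ := add_right_cancel hij
  have hiz : ((i.val : ℤ) - (i'.val : ℤ)) • a₁ = 0 := by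
    rw [sub_smul, natCast_zsmul, natCast_zsmul, hia, sub_self]
  have hid : ((p : ℤ)) ∣ ((i.val : ℤ) - i'.val) := by
    have h2 := addOrderOf_dvd_iff_zsmul_eq_zero.mpr hiz
    rw [horda₁] at h2
    exact h2
  have hi : i = i' := by
    have := (ZMod.intCast_zmod_eq_zero_iff_dvd _ p).mpr hid
    push_cast at this
    rw [sub_eq_zero, ZMod.natCast_val, ZMod.natCast_val, ZMod.cast_id, ZMod.cast_id] at this
    exact this
  rw [hi]


lemma exists_coords (p : ℕ) [Fact p.Prime] (Q : Type*) [AddCommGroup Q] [Module (ZMod p) Q]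
    [Fintype Q] (hcard : p * p ≤ Fintype.card Q) :
    ∃ (φ ψ : Q →+ ZMod p) (x y : Q), φ x = 1 ∧ φ y = 0 ∧ ψ x = 0 ∧ ψ y = 1 := by
  have hp : p.Prime := Fact.out
  haveI : Module.Finite (ZMod p) Q := Module.Finite.of_finite
  have hcardQ : Fintype.card Q = p ^ Module.finrank (ZMod p) Q := by
    have h := Module.card_eq_pow_finrank (K := ZMod p) (V := Q)
    rwa [ZMod.card] at h
  have hrank : 2 ≤ Module.finrank (ZMod p) Q := by
    by_contra h
    push_neg at h
    have hle : Fintype.card Q ≤ p := by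
      rw [hcardQ]
      calc p ^ Module.finrank (ZMod p) Q ≤ p ^ 1 := Nat.pow_le_pow_right hp.pos (by omega)
      _ = p := pow_one p
    have h2 : p * p ≤ p := hcard.trans hle
    nlinarith [hp.two_le]
  let B := Module.finBasis (ZMod p) Q
  let i0 : Fin (Module.finrank (ZMod p) Q) := ⟨0, by omega⟩
  let i1 : Fin (Module.finrank (ZMod p) Q) := ⟨1, by omega⟩
  have hi01 : i0 ≠ i1 := by
    intro h
    have := congrArg Fin.val h
    simp [i0, i1] at this
  refine ⟨(B.coord i0).toAddMonoidHom, (B.coord i1).toAddMonoidHom, B i0, B i1, ?_, ?_, ?_, ?_⟩ <;>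
    simp [Module.Basis.coord_apply, Module.Basis.repr_self, Finsupp.single_eq_same,
      Finsupp.single_eq_of_ne, hi01, Ne.symm hi01]



noncomputable def chi (p : ℕ) [NeZero p] : ZMod p →+ QZ :=
  ZMod.lift p ⟨zmultiplesHom QZ (((p : ℚ)⁻¹ : ℚ) : QZ), by
    simp only [zmultiplesHom_apply]
    rw [natCast_zsmul, ← AddCircle.coe_nsmul]
    norm_num [NeZero.ne p]⟩

lemma chi_one_ne (p : ℕ) [Fact p.Prime] : chi p 1 ≠ 0 := by
  have h : chi p 1 = (((p : ℚ)⁻¹ : ℚ) : QZ) := by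
    have : (1 : ZMod p) = ((1 : ℤ) : ZMod p) := by norm_cast
    rw [chi, this, ZMod.lift_coe]
    simp
  rw [h]
  intro hc
  rw [AddCircle.coe_eq_zero_iff] at hc
  obtain ⟨n, hn⟩ := hc
  have hp1 : (1:ℚ) < p := by exact_mod_cast (Fact.out : p.Prime).one_lt
  have h0 : (0:ℚ) < (p:ℚ)⁻¹ := by positivity
  have h1 : (p:ℚ)⁻¹ < 1 := by
    rw [inv_lt_one_iff₀]; right; exact hp1
  rw [← hn] at *
  have : (0:ℚ) < n • (1:ℚ) := h0
  have h2 : (n • (1:ℚ)) = (n:ℚ) := by simp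
  rw [h2] at this h1
  have hn1 : (1:ℤ) ≤ n := by exact_mod_cast this
  have : (1:ℚ) ≤ (n:ℚ) := by exact_mod_cast hn1
  linarith

lemma mk_pairing (p : ℕ) [Fact p.Prime] {A : Type*} [AddCommGroup A] {Q : Type*} [AddCommGroup Q]
    (π : A →+ Q) (φ ψ : Q →+ ZMod p) (u v : A)
    (h1 : φ (π u) = 1) (h2 : φ (π v) = 0) (h3 : ψ (π u) = 0) (h4 : ψ (π v) = 1) :
    ∃ f : A →+ A →+ QZ, (∀ x, f x x = 0) ∧ f ≠ 0 := by
  haveI : NeZero p := ⟨(Fact.out : p.Prime).ne_zero⟩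
  set χ : ZMod p →+ QZ := chi p with hχ
  set f : A →+ A →+ QZ :=
    { toFun := fun x =>
      { toFun := fun y => χ (φ (π x) * ψ (π y) - φ (π y) * ψ (π x))
        map_zero' := by simp
        map_add' := by
          intro y z
          have key : φ (π x) * ψ (π (y + z)) - φ (π (y + z)) * ψ (π x)
              = (φ (π x) * ψ (π y) - φ (π y) * ψ (π x))
                + (φ (π x) * ψ (π z) - φ (π z) * ψ (π x)) := by
            simp only [map_add]; ring
          show χ _ = χ _ + χ _
          rw [key, map_add] }
      map_zero' := by
        ext y
        simp
      map_add' := by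
        intro x x'
        ext y
        have key : φ (π (x + x')) * ψ (π y) - φ (π y) * ψ (π (x + x'))
            = (φ (π x) * ψ (π y) - φ (π y) * ψ (π x))
              + (φ (π x') * ψ (π y) - φ (π y) * ψ (π x')) := by
          simp only [map_add]; ring
        simp only [AddMonoidHom.add_apply, AddMonoidHom.coe_mk, ZeroHom.coe_mk]
        rw [key, map_add] } with hf
  refine ⟨f, fun x => by simp [hf], ?_⟩
  intro h0
  have hfuv : f u v = χ 1 := by
    rw [hf]
    simp only [AddMonoidHom.coe_mk, ZeroHom.coe_mk]
    rw [h1, h2, h3, h4]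
    norm_num
  rw [h0] at hfuv
  exact chi_one_ne p (by rw [← hfuv]; rfl)

/-- A non-cyclic finite abelian group carries a nontrivial alternating pairing to `ℚ/ℤ`. -/
theorem stmt3 (A : Type*) [AddCommGroup A] [Fintype A] (hnc : ¬ IsAddCyclic A) :
    ∃ f : A →+ A →+ QZ, (∀ x, f x x = 0) ∧ f ≠ 0 := by
  classical
  obtain ⟨p, hp, a₁, b, hpa₁, hpb, hinj⟩ := exists_prime_indep A hnc
  haveI : Fact p.Prime := ⟨hp⟩
  haveI : NeZero p := ⟨hp.ne_zero⟩
  set μ : A →+ A := smulAddHom ℕ A p with hμ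
  have hker : ∀ ij : ZMod p × ZMod p, (ij.1.val • a₁ + ij.2.val • b) ∈ μ.ker := by
    rintro ⟨i, j⟩
    rw [AddMonoidHom.mem_ker, hμ, smulAddHom_apply]
    rw [smul_add, smul_comm, hpa₁, smul_zero, smul_comm, hpb, smul_zero, add_zero]
  have hcard_ker : p * p ≤ Nat.card μ.ker := by
    have hi2 : Function.Injective (fun ij : ZMod p × ZMod p =>
        (⟨ij.1.val • a₁ + ij.2.val • b, hker ij⟩ : μ.ker)) :=
      fun x y h => hinj (congrArg Subtype.val h)
    calc p * p = Nat.card (ZMod p × ZMod p) := by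
          simp [Nat.card_eq_fintype_card, ZMod.card]
    _ ≤ Nat.card μ.ker := Nat.card_le_card_of_injective _ hi2
  set Q := A ⧸ μ.range with hQ
  letI : Module (ZMod p) Q := QuotientAddGroup.zmodModule (n := p) (fun x => ⟨x, rfl⟩)
  have hQcard : Nat.card Q = Nat.card μ.ker := by
    have h1 : Nat.card A = Nat.card Q * Nat.card μ.range :=
      AddSubgroup.card_eq_card_quotient_mul_card_addSubgroup μ.range
    have h2 : Nat.card A = Nat.card (A ⧸ μ.ker) * Nat.card μ.ker :=
      AddSubgroup.card_eq_card_quotient_mul_card_addSubgroup μ.ker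
    have h3 : Nat.card (A ⧸ μ.ker) = Nat.card μ.range :=
      Nat.card_congr (QuotientAddGroup.quotientKerEquivRange μ).toEquiv
    have hrpos : 0 < Nat.card μ.range := Nat.card_pos
    rw [h3] at h2
    rw [h1, mul_comm] at h2
    exact Nat.eq_of_mul_eq_mul_left hrpos h2
  letI : Fintype Q := Fintype.ofFinite Q
  have hcard : p * p ≤ Fintype.card Q := by
    rw [← Nat.card_eq_fintype_card, hQcard]
    exact hcard_ker
  obtain ⟨φ, ψ, x, y, hφx, hφy, hψx, hψy⟩ := exists_coords p Q hcard
  obtain ⟨u, hu⟩ := QuotientAddGroup.mk'_surjective μ.range x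
  obtain ⟨v, hv⟩ := QuotientAddGroup.mk'_surjective μ.range y
  exact mk_pairing p (QuotientAddGroup.mk' μ.range) φ ψ u v
    (by rw [hu]; exact hφx) (by rw [hv]; exact hφy)
    (by rw [hu]; exact hψx) (by rw [hv]; exact hψy)
end

section
/- Let A be a finite abelian group, ℓ the smallest prime dividing |A|, and let π : A → A/A[ℓ] be the quotient map. Let f be a nontrivial alternating bilinear pairing on A/A[ℓ] with values in ℚ/ℤ, and define f̃(x,y) = f(π x, π y) on A. Then f̃ is a nontrivial alternating bilinear pairing on A which vanishes identically on every subgroup H of A generated by two elements one of which has order dividing ℓ. -/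
/-- Pulling back a nontrivial alternating pairing on `A/A[ℓ]` gives a nontrivial
alternating pairing on `A` vanishing on every subgroup `⟨a, b⟩` with `ord(b) ∣ ℓ`. -/
theorem stmt4 (A : Type*) [AddCommGroup A] [Fintype A] (ℓ : ℕ)
    (hℓ : ℓ.Prime) (hdvd : ℓ ∣ Fintype.card A)
    (hmin : ∀ p : ℕ, p.Prime → p ∣ Fintype.card A → ℓ ≤ p)
    (f : (A ⧸ torsAt ℓ A) →+ (A ⧸ torsAt ℓ A) →+ QZ)
    (halt : ∀ x, f x x = 0) (hne : f ≠ 0) :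
    ∃ ft : A →+ A →+ QZ,
      (∀ x y : A, ft x y =
        f (QuotientAddGroup.mk' (torsAt ℓ A) x) (QuotientAddGroup.mk' (torsAt ℓ A) y)) ∧
      ft ≠ 0 ∧ (∀ x, ft x x = 0) ∧
      (∀ a b : A, addOrderOf b ∣ ℓ →
        ∀ x ∈ AddSubgroup.closure {a, b}, ∀ y ∈ AddSubgroup.closure {a, b}, ft x y = 0) := by
  set π := QuotientAddGroup.mk' (torsAt ℓ A) with hπ
  refine ⟨{ toFun := fun x => (f (π x)).comp π
            map_zero' := by ext y; simp
            map_add' := fun x y => by ext z; simp }, fun x y => rfl, ?_, ?_, ?_⟩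
  · intro h
    apply hne
    ext u v
    show ({ toFun := fun x => (f (π x)).comp π, map_zero' := by ext y; simp,
            map_add' := fun x y => by ext z; simp } : A →+ A →+ QZ) u v = 0
    rw [h]; rfl
  · intro x
    exact halt (π x)
  · intro a b hb x hx y hy
    have hπb : π b = 0 := by
      rw [hπ, QuotientAddGroup.mk'_apply, QuotientAddGroup.eq_zero_iff]
      show ℓ • b = 0
      exact addOrderOf_dvd_iff_nsmul_eq_zero.mp hb
    have hmap : ∀ z ∈ AddSubgroup.closure ({a, b} : Set A),
        π z ∈ AddSubgroup.closure ({π a} : Set (A ⧸ torsAt ℓ A)) := by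
      intro z hz
      have h1 : π z ∈ (AddSubgroup.closure ({a, b} : Set A)).map π :=
        AddSubgroup.mem_map_of_mem π hz
      rw [AddMonoidHom.map_closure] at h1
      have himg : (π : A → A ⧸ torsAt ℓ A) '' {a, b} ⊆
          (AddSubgroup.closure ({π a} : Set (A ⧸ torsAt ℓ A)) : Set (A ⧸ torsAt ℓ A)) := by
        rintro w ⟨c, hc, rfl⟩
        rcases hc with rfl | rfl
        · exact AddSubgroup.subset_closure rfl
        · rw [hπb]; exact (AddSubgroup.closure _).zero_mem
      exact AddSubgroup.closure_le _ |>.mpr himg h1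
    obtain ⟨m, hm⟩ := AddSubgroup.mem_closure_singleton.mp (hmap x hx)
    obtain ⟨n, hn⟩ := AddSubgroup.mem_closure_singleton.mp (hmap y hy)
    show f (π x) (π y) = 0
    rw [← hm, ← hn, map_zsmul]
    simp [map_zsmul, halt]
end

section
/- Let A be a finite abelian group and ℓ the smallest prime dividing |A|. If A/A[ℓ] is cyclic, then the natural restriction map Hom(∧²A, ℚ/ℤ) → ⊕_{H ∈ C} Hom(∧²H, ℚ/ℤ) is injective, where C is the collection of subgroups of A generated by two elements of which at least one has order dividing ℓ. Equivalently: any alternating bilinear pairing f : A × A → ℚ/ℤ that vanishes on every such subgroup H is identically zero. -/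
/-- If `A/A[ℓ]` is cyclic, an alternating pairing on `A` vanishing on every subgroup
`⟨a, b⟩` with `ord(b) ∣ ℓ` is identically zero. -/
theorem stmt5 (A : Type*) [AddCommGroup A] [Fintype A] (ℓ : ℕ)
    (hℓ : ℓ.Prime) (hdvd : ℓ ∣ Fintype.card A)
    (hmin : ∀ p : ℕ, p.Prime → p ∣ Fintype.card A → ℓ ≤ p)
    (hcyc : IsAddCyclic (A ⧸ torsAt ℓ A))
    (f : A →+ A →+ QZ) (halt : ∀ x, f x x = 0)
    (hvan : ∀ a b : A, addOrderOf b ∣ ℓ →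
      ∀ x ∈ AddSubgroup.closure {a, b}, ∀ y ∈ AddSubgroup.closure {a, b}, f x y = 0) :
    f = 0 := by
  obtain ⟨g', hg'⟩ := hcyc
  obtain ⟨g, rfl⟩ := QuotientAddGroup.mk_surjective g'
  have key : ∀ x : A, ∃ m : ℤ, ∃ t : A, ℓ • t = 0 ∧ x = m • g + t := by
    intro x
    obtain ⟨m, hm⟩ := hg' (QuotientAddGroup.mk x)
    refine ⟨m, x - m • g, ?_, by abel⟩
    have hmem : x - m • g ∈ torsAt ℓ A := by
      rw [← QuotientAddGroup.eq_iff_sub_mem]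
      simpa using hm.symm
    exact hmem
  ext x y
  obtain ⟨m, t, ht, rfl⟩ := key x
  obtain ⟨n, s, hs, rfl⟩ := key y
  have hgs : f g s = 0 := hvan g s (addOrderOf_dvd_of_nsmul_eq_zero hs)
      g (AddSubgroup.subset_closure (by simp)) s (AddSubgroup.subset_closure (by simp))
  have htg : f t g = 0 := hvan g t (addOrderOf_dvd_of_nsmul_eq_zero ht)
      t (AddSubgroup.subset_closure (by simp)) g (AddSubgroup.subset_closure (by simp))
  have hts : f t s = 0 := hvan t s (addOrderOf_dvd_of_nsmul_eq_zero hs)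
      t (AddSubgroup.subset_closure (by simp)) s (AddSubgroup.subset_closure (by simp))
  have hgg := halt g
  simp [map_add, map_zsmul, hgs, htg, hts, hgg]
end

section
/- Let A be a finite abelian group and ℓ the smallest prime dividing |A|. If A/A[ℓ] is not cyclic, then the restriction map Hom(∧²A, ℚ/ℤ) → ⊕_{H ∈ C} Hom(∧²H, ℚ/ℤ) is NOT injective, where C is the collection of subgroups of A generated by two elements at least one of which has order dividing ℓ. -/
/-!
A pairing pulled back from `B = A/A[ℓ]` kills `A[ℓ]`, so on `⟨a, b⟩` with `ℓ b = 0` it only sees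
the cyclic group generated by the image of `a`, where every alternating pairing vanishes. It thus
suffices to find a nonzero alternating pairing on the non-cyclic group `B`: writing
`B ≅ ⨁ ℤ/nᵢ`, non-cyclicity gives `i ≠ j` with `q = gcd(nᵢ, nⱼ) > 1`, and the determinant of the
`i`-th and `j`-th coordinates reduced mod `q`, read in `(1/q)ℤ/ℤ ⊂ ℚ/ℤ`, is such a pairing.
-/

open scoped DirectSum

def detPairing (R : Type*) [CommRing R] : R × R →+ R × R →+ R :=
  AddMonoidHom.mk'
    (fun x => AddMonoidHom.mk' (fun y => x.1 * y.2 - x.2 * y.1) fun y z => by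
      simp only [Prod.fst_add, Prod.snd_add]; ring)
    fun x w => by
      ext y
      simp only [AddMonoidHom.mk'_apply, AddMonoidHom.add_apply, Prod.fst_add, Prod.snd_add]
      ring

@[simp]
lemma detPairing_apply {R : Type*} [CommRing R] (x y : R × R) :
    detPairing R x y = x.1 * y.2 - x.2 * y.1 := rfl

lemma isAddCyclic_directSum_zmod {ι : Type*} [Fintype ι] [DecidableEq ι] (n : ι → ℕ)
    (hn : Pairwise (Function.onFun Nat.Coprime n)) : IsAddCyclic (⨁ i, ZMod (n i)) :=
  let e := (ZMod.prodEquivPi n hn).toAddEquiv.trans (DirectSum.addEquivProd _).symm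
  isAddCyclic_of_surjective e.toAddMonoidHom e.surjective

lemma DirectSum.exists_hom_zmod_prod {ι : Type*} [DecidableEq ι] (n : ι → ℕ) {q : ℕ} {i j : ι}
    (hij : i ≠ j) (hi : q ∣ n i) (hj : q ∣ n j) :
    ∃ ψ : (⨁ k, ZMod (n k)) →+ ZMod q × ZMod q,
      ψ (DirectSum.of _ i 1) = (1, 0) ∧ ψ (DirectSum.of _ j 1) = (0, 1) := by
  let proj (k : ι) (hk : q ∣ n k) : (⨁ k, ZMod (n k)) →+ ZMod q :=
    (ZMod.castHom hk (ZMod q)).toAddMonoidHom.comp (DirectSum.component ℤ ι _ k).toAddMonoidHom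
  refine ⟨(proj i hi).prod (proj j hj), ?_, ?_⟩ <;>
    simp [proj, ← DirectSum.lof_eq_of ℤ, DirectSum.component.of, hij, hij.symm,
      ZMod.cast_one hi, ZMod.cast_one hj]

lemma exists_hom_zmod_prod_of_not_isAddCyclic (B : Type*) [AddCommGroup B] [Finite B]
    (hB : ¬ IsAddCyclic B) :
    ∃ q : ℕ, 1 < q ∧ ∃ ψ : B →+ ZMod q × ZMod q, ∃ u v : B, ψ u = (1, 0) ∧ ψ v = (0, 1) := by
  classical
  obtain ⟨ι, _, n, hn, ⟨e⟩⟩ := AddCommGroup.equiv_directSum_zmod_of_finite' B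
  obtain ⟨i, j, hij, hgcd⟩ : ∃ i j, i ≠ j ∧ (n i).gcd (n j) ≠ 1 := by
    by_contra! h
    have := isAddCyclic_directSum_zmod n h
    exact hB (isAddCyclic_of_surjective e.symm.toAddMonoidHom e.symm.surjective)
  obtain ⟨ψ, hi, hj⟩ :=
    DirectSum.exists_hom_zmod_prod n hij (Nat.gcd_dvd_left _ _) (Nat.gcd_dvd_right _ _)
  refine ⟨_, ?_, ψ.comp e.toAddMonoidHom, e.symm (DirectSum.of _ i 1),
    e.symm (DirectSum.of _ j 1), by simpa using hi, by simpa using hj⟩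
  have := Nat.gcd_pos_of_pos_left (n j) (hn i).le
  omega

noncomputable def ZMod.toQZ (q : ℕ) : ZMod q →+ QZ :=
  ZMod.lift q ⟨zmultiplesHom QZ ((1 / q : ℚ) : QZ), by
    rcases q.eq_zero_or_pos with rfl | hq
    · simp
    · have h := addOrderOf_nsmul_eq_zero ((1 / q : ℚ) : QZ)
      rwa [AddCircle.addOrderOf_period_div hq, ← natCast_zsmul] at h⟩

lemma ZMod.toQZ_one_ne_zero {q : ℕ} (hq : 1 < q) : ZMod.toQZ q 1 ≠ 0 := by
  have : ZMod.toQZ q 1 = ((1 / q : ℚ) : QZ) := by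
    rw [← Int.cast_one (R := ZMod q), ZMod.toQZ, ZMod.lift_coe]
    simp
  rw [this, Ne, ← AddMonoid.addOrderOf_eq_one_iff, AddCircle.addOrderOf_period_div (by omega)]
  exact hq.ne'

lemma exists_alternating_ne_zero_of_not_isAddCyclic (B : Type*) [AddCommGroup B] [Finite B]
    (hB : ¬ IsAddCyclic B) : ∃ f : B →+ B →+ QZ, (∀ x, f x x = 0) ∧ f ≠ 0 := by
  obtain ⟨q, hq, ψ, u, v, hu, hv⟩ := exists_hom_zmod_prod_of_not_isAddCyclic B hB
  refine ⟨(((detPairing (ZMod q)).compr₂ (ZMod.toQZ q)).comp ψ).compl₂ ψ, fun x => ?_,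
    fun h => ?_⟩
  · simp [mul_comm]
  · apply ZMod.toQZ_one_ne_zero hq
    simpa [hu, hv] using DFunLike.congr_fun (DFunLike.congr_fun h u) v

lemma AddMonoidHom.map_mem_zmultiples_of_mem_closure_pair {A B : Type*} [AddGroup A] [AddGroup B]
    (φ : A →+ B) {a b x : A} (hb : φ b = 0) (hx : x ∈ AddSubgroup.closure {a, b}) :
    φ x ∈ AddSubgroup.zmultiples (φ a) := by
  have hab : {a, b} ⊆ ((AddSubgroup.zmultiples (φ a)).comap φ : Set A) :=
    Set.insert_subset_iff.mpr ⟨AddSubgroup.mem_zmultiples _, by simp [hb]⟩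
  exact (AddSubgroup.closure_le _).mpr hab hx

theorem stmt6_general (A : Type*) [AddCommGroup A] [Fintype A] (ℓ : ℕ)
    (hnc : ¬ IsAddCyclic (A ⧸ torsAt ℓ A)) :
    ∃ f : A →+ A →+ QZ, (∀ x, f x x = 0) ∧ f ≠ 0 ∧
      ∀ a b : A, addOrderOf b ∣ ℓ →
        ∀ x ∈ AddSubgroup.closure {a, b}, ∀ y ∈ AddSubgroup.closure {a, b}, f x y = 0 := by
  obtain ⟨f, hf_alt, hf_ne⟩ := exists_alternating_ne_zero_of_not_isAddCyclic _ hnc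
  let π := QuotientAddGroup.mk' (torsAt ℓ A)
  refine ⟨(f.comp π).compl₂ π, fun x => hf_alt (π x), fun h => hf_ne ?_, ?_⟩
  · ext u v
    exact DFunLike.congr_fun (DFunLike.congr_fun h u) v
  · intro a b hb x hx y hy
    have hπb : π b = 0 :=
      (QuotientAddGroup.eq_zero_iff b).mpr (addOrderOf_dvd_iff_nsmul_eq_zero.mp hb)
    obtain ⟨m, hm⟩ := AddSubgroup.mem_zmultiples_iff.mp
      (π.map_mem_zmultiples_of_mem_closure_pair hπb hx)
    obtain ⟨k, hk⟩ := AddSubgroup.mem_zmultiples_iff.mp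
      (π.map_mem_zmultiples_of_mem_closure_pair hπb hy)
    simp [← hm, ← hk, hf_alt]

/-- If `A/A[ℓ]` is not cyclic, there is a nonzero alternating pairing on `A` vanishing
on every subgroup `⟨a, b⟩` with `ord(b) ∣ ℓ` (so the restriction map is not injective). -/
theorem stmt6 (A : Type*) [AddCommGroup A] [Fintype A] (ℓ : ℕ)
    (hℓ : ℓ.Prime) (hdvd : ℓ ∣ Fintype.card A)
    (hmin : ∀ p : ℕ, p.Prime → p ∣ Fintype.card A → ℓ ≤ p)
    (hnc : ¬ IsAddCyclic (A ⧸ torsAt ℓ A)) :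
    ∃ f : A →+ A →+ QZ, (∀ x, f x x = 0) ∧ f ≠ 0 ∧
      ∀ a b : A, addOrderOf b ∣ ℓ →
        ∀ x ∈ AddSubgroup.closure {a, b}, ∀ y ∈ AddSubgroup.closure {a, b}, f x y = 0 :=
  stmt6_general A ℓ hnc
end

section
/- Let a, b be elements of a finite abelian group G = (ℤ/ℓℤ)^r × ℤ/kℤ with ℓ | k, written a = (v₁, c₁), b = (v₂, c₂). Then there exist v₁', c₁', v₂' such that ⟨a, b⟩ = ⟨(v₁', c₁'), (v₂', 0)⟩, i.e. the subgroup generated by a and b is generated by two elements, one of which lies in the subgroup (ℤ/ℓℤ)^r × {0} and hence has order dividing ℓ. -/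
/-! The cyclic coordinates of `a` and `b` are `x • g` and `y • g` for a generator `g`. Writing
`(x, y) = d • (u, w)` with `u, w` coprime, a Bézout relation `p * u + q * w = 1` makes
`[[p, q], [-w, u]]` unimodular, so `p • a + q • b` and `-w • a + u • b` generate the same
subgroup as `a` and `b`, and the cyclic coordinate of the second one is `(u * y - w * x) • g = 0`. -/

theorem exists_isCoprime_mul_eq_mul {R : Type*} [EuclideanDomain R] [GCDMonoid R] (x y : R) :
    ∃ u w : R, IsCoprime u w ∧ w * x = u * y := by
  by_cases hg : gcd x y = 0
  · obtain ⟨rfl, rfl⟩ := (gcd_eq_zero_iff x y).mp hg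
    exact ⟨1, 0, isCoprime_one_left, by simp⟩
  · refine ⟨x / gcd x y, y / gcd x y, isCoprime_div_gcd_div_gcd_of_gcd_ne_zero hg, ?_⟩
    obtain ⟨x', hx⟩ := gcd_dvd_left x y
    obtain ⟨y', hy⟩ := gcd_dvd_right x y
    generalize gcd x y = g at hg hx hy ⊢
    subst hx hy
    rw [mul_div_cancel_left₀ _ hg, mul_div_cancel_left₀ _ hg]
    ring

namespace AddSubgroup

theorem closure_pair_eq_of_det_eq_one_s8 {G : Type*} [AddCommGroup G] (a b : G)
    {p q m n : ℤ} (h : p * n - q * m = 1) :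
    closure {a, b} = closure {p • a + q • b, m • a + n • b} := by
  have ha : a = n • (p • a + q • b) - q • (m • a + n • b) := by
    match_scalars
    · linear_combination -h
    · ring
  have hb : b = p • (m • a + n • b) - m • (p • a + q • b) := by
    match_scalars
    · linear_combination -h
    · ring
  apply le_antisymm <;>
    simp only [closure_le, Set.insert_subset_iff, Set.singleton_subset_iff, SetLike.mem_coe,
      mem_closure_pair]
  · exact ⟨⟨n, -q, by rw [neg_smul, ← sub_eq_add_neg, ← ha]⟩,
      ⟨-m, p, by rw [neg_smul, neg_add_eq_sub, ← hb]⟩⟩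
  · exact ⟨⟨p, q, rfl⟩, ⟨m, n, rfl⟩⟩

theorem exists_closure_pair_eq_of_snd_eq_zero {A B : Type*} [AddCommGroup A]
    [AddCommGroup B] [IsAddCyclic B] (a b : A × B) :
    ∃ a' b' : A × B, b'.2 = 0 ∧ closure {a, b} = closure {a', b'} := by
  obtain ⟨g, hg⟩ := IsAddCyclic.exists_generator (α := B)
  obtain ⟨x, hx⟩ := mem_zmultiples_iff.mp (hg a.2)
  obtain ⟨y, hy⟩ := mem_zmultiples_iff.mp (hg b.2)
  obtain ⟨u, w, ⟨p, q, hpq⟩, hwu⟩ := exists_isCoprime_mul_eq_mul x y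
  refine ⟨p • a + q • b, (-w) • a + u • b, ?_,
    closure_pair_eq_of_det_eq_one_s8 a b (by linear_combination hpq)⟩
  simp only [Prod.snd_add, Prod.smul_snd, ← hx, ← hy, smul_smul, ← add_smul]
  rw [show -w * x + u * y = 0 by linear_combination -hwu, zero_smul]

end AddSubgroup

theorem stmt8_general (ℓ r k : ℕ)
    (a b : (Fin r → ZMod ℓ) × ZMod k) :
    ∃ (v₁' : Fin r → ZMod ℓ) (c₁' : ZMod k) (v₂' : Fin r → ZMod ℓ),
      AddSubgroup.closure {a, b} =
        AddSubgroup.closure {(v₁', c₁'), (v₂', (0 : ZMod k))} := by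
  obtain ⟨⟨v₁, c₁⟩, ⟨v₂, c₂⟩, rfl, h⟩ := AddSubgroup.exists_closure_pair_eq_of_snd_eq_zero a b
  exact ⟨v₁, c₁, v₂, h⟩

/-- In `(ℤ/ℓℤ)^r × ℤ/kℤ` with `ℓ ∣ k`, any 2-generated subgroup `⟨a, b⟩` is generated by
two elements one of which lies in `(ℤ/ℓℤ)^r × {0}`. -/
theorem stmt8 (ℓ r k : ℕ) (hℓ : ℓ.Prime) (hk : 0 < k) (hdvd : ℓ ∣ k)
    (a b : (Fin r → ZMod ℓ) × ZMod k) :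
    ∃ (v₁' : Fin r → ZMod ℓ) (c₁' : ZMod k) (v₂' : Fin r → ZMod ℓ),
      AddSubgroup.closure {a, b} =
        AddSubgroup.closure {(v₁', c₁'), (v₂', (0 : ZMod k))} :=
  stmt8_general ℓ r k a b
end
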